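/- The coverage performance function H(P) = −∑_i ∫_{V_i} ‖q − p_i‖² φ(q) dq over the Voronoi partition satisfies: for any partition W_1, …, W_N of Q into measurable sets, −∑_i ∫_{W_i} ‖q − p_i‖² φ(q) dq ≤ H(P). That is, among all partitions, the Voronoi partition maximizes the performance for fixed generator positions. -/
import Mathlib


open MeasureTheory

set_option maxHeartbeats 800000

private lemma sum_setIntegral_pieces
    {N : ℕ} {Q : Set (EuclideanSpace ℝ (Fin 2))}
    (f : EuclideanSpace ℝ (Fin 2) → ℝ) (hf : IntegrableOn f Q)
    (A : Fin N → Set (EuclideanSpace ℝ (Fin 2)))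
    (hAm : ∀ i, MeasurableSet (A i))
    (hcover : (⋃ i, A i) = Q)
    (hdisj : ∀ i j, i ≠ j → volume (A i ∩ A j) = 0)
    (B : Set (EuclideanSpace ℝ (Fin 2))) (hB : MeasurableSet B) (hBQ : B ⊆ Q) :
    ∑ i, ∫ q in A i ∩ B, f q = ∫ q in B, f q := by
  have hBu : B = ⋃ i, (A i ∩ B) := by
    rw [← Set.iUnion_inter, hcover, Set.inter_eq_right.mpr hBQ]
  have h := integral_iUnion_ae (μ := volume) (s := fun i => A i ∩ B) (f := f)
      (fun i => ((hAm i).inter hB).nullMeasurableSet)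
      (fun i j hij => measure_mono_null
        (by intro x hx; exact ⟨hx.1.1, hx.2.1⟩) (hdisj i j hij))
      (by rw [← hBu]; exact hf.mono_set hBQ)
  rw [← hBu] at h
  rw [h, tsum_fintype]

/-- For fixed generators, the Voronoi partition maximizes the
coverage performance `H(P) = −∑_i ∫_{V_i} ‖q − p_i‖² φ` among all measurable
partitions of `Q`. -/
theorem voronoi_partition_optimal
    (Q : Set (EuclideanSpace ℝ (Fin 2))) (hQ : IsCompact Q) (hQm : MeasurableSet Q)
    (N : ℕ) (p : Fin N → EuclideanSpace ℝ (Fin 2))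
    (hp : Function.Injective p) (hpQ : ∀ i, p i ∈ Q)
    (φ : EuclideanSpace ℝ (Fin 2) → ℝ) (hφ : ∀ q, 0 ≤ φ q)
    (hφi : IntegrableOn (fun q => ‖q‖ ^ 2 * φ q) Q) (hφi' : IntegrableOn φ Q)
    (V : Fin N → Set (EuclideanSpace ℝ (Fin 2)))
    (hV : ∀ i, V i = {q ∈ Q | ∀ j : Fin N, ‖q - p i‖ ≤ ‖q - p j‖})
    (W : Fin N → Set (EuclideanSpace ℝ (Fin 2)))
    (hWm : ∀ i, MeasurableSet (W i)) (hWQ : ∀ i, W i ⊆ Q)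
    (hWcover : (⋃ i, W i) = Q)
    (hWdisj : ∀ i j, i ≠ j → volume (W i ∩ W j) = 0) :
    -(∑ i, ∫ q in W i, ‖q - p i‖ ^ 2 * φ q)
      ≤ -(∑ i, ∫ q in V i, ‖q - p i‖ ^ 2 * φ q) := by
  rcases Nat.eq_zero_or_pos N with hN | hN
  · subst hN; simp
  have hne : Nonempty (Fin N) := ⟨⟨0, hN⟩⟩
  set f : Fin N → EuclideanSpace ℝ (Fin 2) → ℝ :=
    fun i q => ‖q - p i‖ ^ 2 * φ q with hfdef
  -- integrability of each f i on Q
  have hφm : AEStronglyMeasurable φ (volume.restrict Q) := hφi'.aestronglyMeasurable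
  have hfm : ∀ i, AEStronglyMeasurable (f i) (volume.restrict Q) := by
    intro i
    exact (((continuous_id.sub continuous_const).norm.pow 2).aestronglyMeasurable).mul hφm
  have hfint : ∀ i, IntegrableOn (f i) Q := by
    intro i
    have hint : IntegrableOn (fun q => 2 * (‖q‖ ^ 2 * φ q) + (2 * ‖p i‖ ^ 2) * φ q) Q :=
      (hφi.const_mul 2).add (hφi'.const_mul (2 * ‖p i‖ ^ 2))
    refine Integrable.mono' hint (hfm i) (ae_of_all _ fun q => ?_)
    have h1 : ‖q - p i‖ ≤ ‖q‖ + ‖p i‖ := norm_sub_le _ _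
    have h2 : (0:ℝ) ≤ ‖q - p i‖ := norm_nonneg _
    have h3 : (0:ℝ) ≤ ‖q‖ := norm_nonneg _
    have h4 : (0:ℝ) ≤ ‖p i‖ := norm_nonneg _
    have h5 : (0:ℝ) ≤ φ q := hφ q
    have : ‖f i q‖ = ‖q - p i‖ ^ 2 * φ q := by
      rw [Real.norm_eq_abs]
      exact abs_of_nonneg (mul_nonneg (pow_nonneg h2 2) h5)
    rw [this]
    nlinarith [sq_nonneg (‖q‖ - ‖p i‖), mul_le_mul_of_nonneg_right
      (mul_self_le_mul_self h2 h1) h5]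
  -- properties of Voronoi cells
  have hVQ : ∀ i, V i ⊆ Q := by intro i; rw [hV i]; exact fun q hq => hq.1
  have hVm : ∀ i, MeasurableSet (V i) := by
    intro i
    rw [hV i]
    have : {q ∈ Q | ∀ j : Fin N, ‖q - p i‖ ≤ ‖q - p j‖}
        = Q ∩ ⋂ j, {q | ‖q - p i‖ ≤ ‖q - p j‖} := by
      ext q; simp [Set.mem_iInter]
    rw [this]
    exact hQm.inter (MeasurableSet.iInter fun j =>
      (isClosed_le (continuous_id.sub continuous_const).norm
        (continuous_id.sub continuous_const).norm).measurableSet)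
  have hVcover : (⋃ i, V i) = Q := by
    apply Set.Subset.antisymm (Set.iUnion_subset hVQ)
    intro q hq
    obtain ⟨i, -, hi⟩ := Finset.exists_min_image Finset.univ
      (fun j => ‖q - p j‖) ⟨Classical.arbitrary _, Finset.mem_univ _⟩
    exact Set.mem_iUnion.mpr ⟨i, by rw [hV i]; exact ⟨hq, fun j => hi j (Finset.mem_univ j)⟩⟩
  have hVdisj : ∀ i j, i ≠ j → volume (V i ∩ V j) = 0 := by
    intro i j hij
    have hsub : V i ∩ V j ⊆ (AffineSubspace.perpBisector (p i) (p j) :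
        Set (EuclideanSpace ℝ (Fin 2))) := by
      intro q hq
      have h1 : ‖q - p i‖ ≤ ‖q - p j‖ := by
        have := hq.1; rw [hV i] at this; exact this.2 j
      have h2 : ‖q - p j‖ ≤ ‖q - p i‖ := by
        have := hq.2; rw [hV j] at this; exact this.2 i
      refine SetLike.mem_coe.mpr ?_
      rw [AffineSubspace.mem_perpBisector_iff_dist_eq, dist_eq_norm, dist_eq_norm]
      exact le_antisymm h1 h2
    refine measure_mono_null hsub (MeasureTheory.Measure.addHaar_affineSubspace _ _ ?_)
    simpa [AffineSubspace.perpBisector_eq_top] using fun h => hij (hp h)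
  -- main chain
  have key : ∑ i, ∫ q in V i, f i q ≤ ∑ i, ∫ q in W i, f i q := by
    calc ∑ i, ∫ q in V i, f i q
        = ∑ i, ∑ j, ∫ q in W j ∩ V i, f i q := by
          refine Finset.sum_congr rfl fun i _ => ?_
          exact (sum_setIntegral_pieces (f i) (hfint i) W hWm hWcover hWdisj
            (V i) (hVm i) (hVQ i)).symm
      _ ≤ ∑ i, ∑ j, ∫ q in W j ∩ V i, f j q := by
          refine Finset.sum_le_sum fun i _ => Finset.sum_le_sum fun j _ => ?_
          have hsubQ : W j ∩ V i ⊆ Q := fun q hq => hWQ j hq.1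
          refine setIntegral_mono_on ((hfint i).mono_set hsubQ)
            ((hfint j).mono_set hsubQ) ((hWm j).inter (hVm i)) fun q hq => ?_
          have hle : ‖q - p i‖ ≤ ‖q - p j‖ := by
            have := hq.2; rw [hV i] at this; exact this.2 j
          exact mul_le_mul_of_nonneg_right
            (pow_le_pow_left₀ (norm_nonneg _) hle 2) (hφ q)
      _ = ∑ j, ∑ i, ∫ q in V i ∩ W j, f j q := by
          rw [Finset.sum_comm]
          exact Finset.sum_congr rfl fun j _ => Finset.sum_congr rfl fun i _ => by
            rw [Set.inter_comm]
      _ = ∑ j, ∫ q in W j, f j q := by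
          refine Finset.sum_congr rfl fun j _ => ?_
          exact sum_setIntegral_pieces (f j) (hfint j) V hVm hVcover hVdisj
            (W j) (hWm j) (hWQ j)
  exact neg_le_neg key
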